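/- arXiv:1602.04396 — 2 statements merged into one kernel-verified Lean document; each statement's English description precedes it below -/
import Mathlib

section
/- Let Ω_U ⊆ σB(n×r) be a nonempty subset of the Frobenius-norm ball of radius σ in ℝ^{n×r}, and let Λ be an r×r diagonal matrix whose diagonal entries are ±1. If Ω_B ⊆ {U Λ Uᵀ : U ∈ Ω_U}, then for every ρ > 0, N_{Ω_B}(ρ) ≤ N_{Ω_U}(ρ/(2σ)). -/
open Matrix

noncomputable def coveringNumber {E : Type*} [PseudoMetricSpace E] (Ω : Set E) (ρ : ℝ) : ℕ :=
  sInf {k : ℕ | ∃ C : Finset E, C.card = k ∧ Ω ⊆ ⋃ c ∈ C, Metric.closedBall c ρ}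

attribute [local instance] Matrix.frobeniusNormedAddCommGroup

attribute [local instance] Matrix.frobeniusNormedSpace

/-!
On the ball `‖U‖ ≤ σ` the map `U ↦ U Λ Uᵀ` is `2σ`-Lipschitz for the Frobenius norm, since
`U Λ Uᵀ - V Λ Vᵀ = U Λ (U - V)ᵀ + (U - V) Λ Vᵀ` and multiplying by `Λ` does not increase the norm.
The centres of an optimal cover of `Ω_U` need not lie in the ball, so they are first replaced by
their metric projections onto it: the Frobenius norm is Euclidean, and projecting onto a closed
convex set brings a point closer to every point of the set. The images of the projected centres
then form a `ρ`-cover of `Ω_B` of no larger size.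
-/

open Metric

section Covering

variable {E F : Type*} [PseudoMetricSpace E] [PseudoMetricSpace F]

theorem coveringNumber_le_card {Ω : Set E} {ρ : ℝ} (C : Finset E)
    (hC : Ω ⊆ ⋃ c ∈ C, closedBall c ρ) : coveringNumber Ω ρ ≤ C.card :=
  Nat.sInf_le ⟨C, rfl, hC⟩

theorem TotallyBounded.exists_card_eq_coveringNumber {Ω : Set E} (hΩ : TotallyBounded Ω)
    {δ : ℝ} (hδ : 0 < δ) :
    ∃ C : Finset E, C.card = coveringNumber Ω δ ∧ Ω ⊆ ⋃ c ∈ C, closedBall c δ := by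
  obtain ⟨t, ht, hΩt⟩ := Metric.totallyBounded_iff.mp hΩ δ hδ
  have hcov : Ω ⊆ ⋃ c ∈ ht.toFinset, closedBall c δ := by
    simpa only [Set.Finite.mem_toFinset] using
      hΩt.trans (Set.biUnion_mono le_rfl fun c _ => ball_subset_closedBall)
  have hne : {k : ℕ | ∃ C : Finset E, C.card = k ∧ Ω ⊆ ⋃ c ∈ C, closedBall c δ}.Nonempty :=
    ⟨_, ht.toFinset, rfl, hcov⟩
  exact Nat.sInf_mem hne

theorem coveringNumber_le_of_forall_exists {Ω : Set E} {Ω' : Set F} {δ ρ : ℝ}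
    (hΩ : TotallyBounded Ω) (hδ : 0 < δ) (φ : E → F)
    (h : ∀ y ∈ Ω', ∃ x ∈ Ω, ∀ c, dist x c ≤ δ → dist y (φ c) ≤ ρ) :
    coveringNumber Ω' ρ ≤ coveringNumber Ω δ := by
  classical
  obtain ⟨C, hCcard, hC⟩ := hΩ.exists_card_eq_coveringNumber hδ
  calc coveringNumber Ω' ρ ≤ (C.image φ).card := by
        refine coveringNumber_le_card _ fun y hy => ?_
        obtain ⟨x, hxΩ, hx⟩ := h y hy
        obtain ⟨c, hcC, hxc⟩ := Set.mem_iUnion₂.mp (hC hxΩ)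
        exact Set.mem_iUnion₂.mpr ⟨φ c, Finset.mem_image_of_mem φ hcC, hx c hxc⟩
    _ ≤ C.card := Finset.card_image_le
    _ = coveringNumber Ω δ := hCcard

end Covering

/-- The witness is the metric projection of `u` onto `K`. -/
theorem Convex.exists_mem_forall_norm_sub_le {F : Type*} [NormedAddCommGroup F]
    [InnerProductSpace ℝ F] {K : Set F} (hK : Convex ℝ K) (hKc : IsComplete K)
    (hKne : K.Nonempty) (u : F) : ∃ v ∈ K, ∀ w ∈ K, ‖w - v‖ ≤ ‖w - u‖ := by
  obtain ⟨v, hvK, hv⟩ := exists_norm_eq_iInf_of_complete_convex hKne hKc hK u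
  have hobtuse := (norm_eq_iInf_iff_real_inner_le_zero hK hvK).mp hv
  refine ⟨v, hvK, fun w hw => ?_⟩
  have hsplit : w - u = (w - v) - (u - v) := by abel
  have hsq : ‖w - v‖ ^ 2 ≤ ‖w - u‖ ^ 2 := by
    rw [hsplit, norm_sub_sq_real (w - v) (u - v), real_inner_comm]
    nlinarith [hobtuse w hw, sq_nonneg ‖u - v‖]
  exact pow_le_pow_iff_left₀ (norm_nonneg _) (norm_nonneg _) two_ne_zero |>.mp hsq

namespace Matrix

variable {m n : Type*} [Fintype m] [Fintype n]

theorem frobenius_parallelogram (A B : Matrix m n ℝ) :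
    ‖A + B‖ ^ 2 + ‖A - B‖ ^ 2 = 2 * (‖A‖ ^ 2 + ‖B‖ ^ 2) :=
  parallelogram_law_with_norm ℝ (WithLp.toLp 2 fun i => WithLp.toLp 2 (A i))
    (WithLp.toLp 2 fun i => WithLp.toLp 2 (B i))

noncomputable abbrev frobeniusInnerProductSpace : InnerProductSpace ℝ (Matrix m n ℝ) :=
  InnerProductSpace.ofNorm ℝ fun A B => by simpa only [sq] using frobenius_parallelogram A B

theorem frobenius_norm_mul_diagonal_le {l : Type*} [Fintype l] [DecidableEq n]
    (A : Matrix l n ℝ) {ε : n → ℝ} (hε : ∀ j, |ε j| ≤ 1) :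
    ‖A * diagonal ε‖ ≤ ‖A‖ := by
  simp only [frobenius_norm_def, mul_diagonal, norm_mul]
  gcongr with i _ j _
  exact mul_le_of_le_one_right (norm_nonneg _) (hε j)

theorem frobenius_norm_mul_diagonal_mul_transpose_sub_le {m : Type*} [Fintype m]
    [DecidableEq n] {ε : n → ℝ} (hε : ∀ j, |ε j| ≤ 1) (U V : Matrix m n ℝ) :
    ‖U * diagonal ε * Uᵀ - V * diagonal ε * Vᵀ‖ ≤ (‖U‖ + ‖V‖) * ‖U - V‖ := by
  have hsplit : U * diagonal ε * Uᵀ - V * diagonal ε * Vᵀ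
      = U * diagonal ε * (U - V)ᵀ + (U - V) * diagonal ε * Vᵀ := by
    simp only [transpose_sub, Matrix.sub_mul, Matrix.mul_sub]
    abel
  calc ‖U * diagonal ε * Uᵀ - V * diagonal ε * Vᵀ‖
      ≤ ‖U * diagonal ε‖ * ‖(U - V)ᵀ‖ + ‖(U - V) * diagonal ε‖ * ‖Vᵀ‖ := by
        rw [hsplit]
        exact (norm_add_le _ _).trans
          (add_le_add (frobenius_norm_mul _ _) (frobenius_norm_mul _ _))
    _ ≤ ‖U‖ * ‖U - V‖ + ‖U - V‖ * ‖V‖ := by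
        rw [frobenius_norm_transpose, frobenius_norm_transpose]
        gcongr <;> exact frobenius_norm_mul_diagonal_le _ hε
    _ = (‖U‖ + ‖V‖) * ‖U - V‖ := by ring

end Matrix

attribute [local instance] Matrix.frobeniusInnerProductSpace

theorem covering_symm_product_general {n r : ℕ} (σ : ℝ) (hσ : 0 < σ)
    (ΩU : Set (Matrix (Fin n) (Fin r) ℝ))
    (hUb : ΩU ⊆ Metric.closedBall 0 σ)
    (ε : Fin r → ℝ) (hε : ∀ i, ε i = 1 ∨ ε i = -1)
    (ΩB : Set (Matrix (Fin n) (Fin n) ℝ))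
    (hB : ΩB ⊆ {X | ∃ U ∈ ΩU, X = U * Matrix.diagonal ε * Uᵀ})
    (ρ : ℝ) (hρ : 0 < ρ) :
    coveringNumber ΩB ρ ≤ coveringNumber ΩU (ρ / (2 * σ)) := by
  have hε_abs : ∀ i, |ε i| ≤ 1 := fun i => by rcases hε i with h | h <;> simp [h]
  choose π hπσ hπ using
    (convex_closedBall (0 : Matrix (Fin n) (Fin r) ℝ) σ).exists_mem_forall_norm_sub_le
      isClosed_closedBall.isComplete (nonempty_closedBall.2 hσ.le)
  refine coveringNumber_le_of_forall_exists ((isCompact_closedBall 0 σ).totallyBounded.subset hUb)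
    (by positivity) (fun c => π c * diagonal ε * (π c)ᵀ) ?_
  rintro _ hX
  obtain ⟨U, hU, rfl⟩ := hB hX
  refine ⟨U, hU, fun c hc => ?_⟩
  have hUσ : ‖U‖ ≤ σ := mem_closedBall_zero_iff.mp (hUb hU)
  have hπc : ‖π c‖ ≤ σ := mem_closedBall_zero_iff.mp (hπσ c)
  rw [dist_eq_norm] at hc ⊢
  calc _ ≤ (‖U‖ + ‖π c‖) * ‖U - π c‖ :=
        frobenius_norm_mul_diagonal_mul_transpose_sub_le hε_abs _ _
    _ ≤ (2 * σ) * (ρ / (2 * σ)) := by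
        gcongr
        · linarith
        · exact (hπ c U (hUb hU)).trans hc
    _ = ρ := by field_simp

/-- covering number of a set of symmetric products `U Λ Uᵀ`
with `Λ` a diagonal `±1` matrix. -/
theorem covering_symm_product {n r : ℕ} (σ : ℝ) (hσ : 0 < σ)
    (ΩU : Set (Matrix (Fin n) (Fin r) ℝ)) (hUne : ΩU.Nonempty)
    (hUb : ΩU ⊆ Metric.closedBall 0 σ)
    (ε : Fin r → ℝ) (hε : ∀ i, ε i = 1 ∨ ε i = -1)
    (ΩB : Set (Matrix (Fin n) (Fin n) ℝ))
    (hB : ΩB ⊆ {X | ∃ U ∈ ΩU, X = U * Matrix.diagonal ε * Uᵀ})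
    (ρ : ℝ) (hρ : 0 < ρ) :
    coveringNumber ΩB ρ ≤ coveringNumber ΩU (ρ / (2 * σ)) :=
  covering_symm_product_general σ hσ ΩU hUb ε hε ΩB hB ρ hρ
end

section
/- Let a ∈ ℝⁿ be a random vector uniformly distributed on the Euclidean ball of radius R. If X ∈ ℝ^{n×n} is symmetric with ‖X‖₂ ≥ ε > 0, then for every δ > 0, P[|aᵀ X a| ≤ δ] ≤ 2√(2δ) · V_{n−1} / (√ε · R · V_n). -/
open Matrix

open MeasureTheory

/-- `V_d`: the volume of the unit Euclidean ball in `ℝ^d`. -/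
noncomputable def unitBallVol (d : ℕ) : ℝ :=
  (volume (Metric.ball (0 : EuclideanSpace ℝ (Fin d)) 1)).toReal

/-- The spectral norm (largest singular value) of a matrix. -/
noncomputable def matSpectralNorm {n₁ n₂ : ℕ} (X : Matrix (Fin n₁) (Fin n₂) ℝ) : ℝ :=
  ‖LinearMap.toContinuousLinearMap (Matrix.toEuclideanLin X)‖

open scoped ENNReal

/-! In an orthonormal eigenbasis of `X`, which preserves both Lebesgue measure and the ball,
the quadratic form becomes `∑ μᵢ yᵢ²`, and some eigenvalue satisfies `|μᵢ₀| ≥ ‖X‖₂ ≥ ε`.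
Fix all coordinates except `yᵢ₀`: the condition `|μᵢ₀ yᵢ₀² + c| ≤ δ` confines `yᵢ₀` to a set of
length at most `2√(2δ/ε)`, while the remaining coordinates range over an `(n-1)`-ball of
radius `R`. By Fubini the set has volume at most `2√(2δ/ε) · R^(n-1) V_{n-1}`; dividing by
`R^n V_n` gives the bound. -/

theorem Real.sqrt_sub_sqrt_le_sqrt_sub (a b : ℝ) : √b - √a ≤ √(b - a) := by
  rcases le_total b a with hba | hab
  · linarith [Real.sqrt_le_sqrt hba, Real.sqrt_nonneg (b - a)]
  rcases le_total a 0 with ha | ha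
  · rw [Real.sqrt_eq_zero'.2 ha, sub_zero]
    exact Real.sqrt_le_sqrt (by linarith)
  · have : √b ≤ √(b - a) + √a := by
      rw [Real.sqrt_le_iff]
      refine ⟨by positivity, ?_⟩
      nlinarith [Real.sq_sqrt (sub_nonneg.2 hab), Real.sq_sqrt ha,
        mul_nonneg (Real.sqrt_nonneg (b - a)) (Real.sqrt_nonneg a)]
    linarith

theorem Real.volume_setOf_sq_mem_Icc_le (a b : ℝ) :
    volume {u : ℝ | u ^ 2 ∈ Set.Icc a b} ≤ ENNReal.ofReal (2 * √(b - a)) := by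
  have hsub :
      {u : ℝ | u ^ 2 ∈ Set.Icc a b} ⊆ Set.Icc (-√b) (-√a) ∪ Set.Icc (√a) (√b) := by
    rintro u ⟨hau, hub⟩
    have hlo : √a ≤ |u| := Real.sqrt_sq_eq_abs u ▸ Real.sqrt_le_sqrt hau
    have hhi : |u| ≤ √b := Real.sqrt_sq_eq_abs u ▸ Real.sqrt_le_sqrt hub
    rcases abs_cases u with ⟨hu, -⟩ | ⟨hu, -⟩
    · exact Or.inr ⟨hu ▸ hlo, hu ▸ hhi⟩
    · exact Or.inl ⟨by linarith, by linarith⟩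
  calc volume {u : ℝ | u ^ 2 ∈ Set.Icc a b}
      ≤ volume (Set.Icc (-√b) (-√a)) + volume (Set.Icc (√a) (√b)) :=
        (measure_mono hsub).trans (measure_union_le _ _)
    _ = ENNReal.ofReal (√b - √a) + ENNReal.ofReal (√b - √a) := by
        rw [Real.volume_Icc, Real.volume_Icc, neg_sub_neg]
    _ ≤ ENNReal.ofReal (√(b - a)) + ENNReal.ofReal (√(b - a)) := by
        gcongr <;> exact Real.sqrt_sub_sqrt_le_sqrt_sub a b
    _ = ENNReal.ofReal (2 * √(b - a)) := by
        rw [← ENNReal.ofReal_add (by positivity) (by positivity), two_mul]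

theorem Real.volume_setOf_abs_mul_sq_add_le {a : ℝ} (ha : a ≠ 0) (c t : ℝ) :
    volume {u : ℝ | |a * u ^ 2 + c| ≤ t} ≤ ENNReal.ofReal (2 * √(2 * t / |a|)) := by
  have hsub : {u : ℝ | |a * u ^ 2 + c| ≤ t} ⊆
      {u : ℝ | u ^ 2 ∈ Set.Icc (-c / a - t / |a|) (-c / a + t / |a|)} := by
    intro u hu
    have h : |u ^ 2 - -c / a| ≤ t / |a| := by
      have e : (u ^ 2 - -c / a) * a = a * u ^ 2 + c := by field_simp; ring
      rwa [le_div_iff₀ (abs_pos.2 ha), ← abs_mul, e]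
    rw [abs_sub_le_iff] at h
    exact ⟨by linarith, by linarith⟩
  refine (measure_mono hsub).trans ((Real.volume_setOf_sq_mem_Icc_le _ _).trans (le_of_eq ?_))
  congr 3
  ring

theorem MeasureTheory.Measure.prod_apply_le_mul_of_forall_slice_le {α β : Type*}
    [MeasurableSpace α] [MeasurableSpace β] {μ : Measure α} {ν : Measure β} [SFinite μ]
    [SFinite ν] {s : Set (α × β)} (hs : MeasurableSet s) {t : Set β}
    (hst : ∀ p ∈ s, p.2 ∈ t) {L : ℝ≥0∞} (hL : ∀ y, μ {x | (x, y) ∈ s} ≤ L) :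
    μ.prod ν s ≤ L * ν t := by
  rw [Measure.prod_apply_symm hs]
  refine (lintegral_mono fun y => ?_).trans (lintegral_indicator_const_le t L)
  by_cases hy : y ∈ t
  · rw [Set.indicator_of_mem hy]
    exact hL y
  · have : {x | (x, y) ∈ s} = ∅ := Set.eq_empty_of_forall_notMem fun x hx => hy (hst _ hx)
    simp [Set.preimage, this]

theorem EuclideanSpace.volume_setOf_abs_sum_mul_sq_le_and_norm_le {m : ℕ}
    (μ : Fin (m + 1) → ℝ) {i₀ : Fin (m + 1)} (hμ : μ i₀ ≠ 0) (δ R : ℝ) :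
    volume {y : EuclideanSpace ℝ (Fin (m + 1)) | |∑ i, μ i * y i ^ 2| ≤ δ ∧ ‖y‖ ≤ R}
      ≤ ENNReal.ofReal (2 * √(2 * δ / |μ i₀|)) *
        volume (Metric.closedBall (0 : EuclideanSpace ℝ (Fin m)) R) := by
  let Ψ : EuclideanSpace ℝ (Fin (m + 1)) → ℝ × (Fin m → ℝ) :=
    MeasurableEquiv.piFinSuccAbove (fun _ => ℝ) i₀ ∘ WithLp.ofLp
  have hΨ : MeasurePreserving Ψ :=
    (volume_preserving_piFinSuccAbove (fun _ => ℝ) i₀).comp (PiLp.volume_preserving_ofLp _)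
  let G : Set (ℝ × (Fin m → ℝ)) :=
    {p | |μ i₀ * p.1 ^ 2 + ∑ j, μ (i₀.succAbove j) * p.2 j ^ 2| ≤ δ ∧
      ‖WithLp.toLp 2 p.2‖ ≤ R}
  have hG : MeasurableSet G := by
    refine (measurableSet_le (α := ℝ) ?_ measurable_const).inter
      (measurableSet_le (α := ℝ) ?_ measurable_const) <;> fun_prop
  have hsub :
      {y : EuclideanSpace ℝ (Fin (m + 1)) | |∑ i, μ i * y i ^ 2| ≤ δ ∧ ‖y‖ ≤ R} ⊆ Ψ ⁻¹' G := by
    rintro y ⟨hq, hy⟩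
    refine ⟨by simpa [Ψ, Fin.sum_univ_succAbove _ i₀, Fin.removeNth] using hq,
      le_trans ?_ hy⟩
    rw [← pow_le_pow_iff_left₀ (norm_nonneg _) (norm_nonneg _) two_ne_zero,
      EuclideanSpace.norm_sq_eq, EuclideanSpace.norm_sq_eq, Fin.sum_univ_succAbove _ i₀]
    exact le_add_of_nonneg_left (sq_nonneg _)
  calc _ ≤ volume (Ψ ⁻¹' G) := measure_mono hsub
    _ ≤ volume G := hΨ.measure_preimage_le G
    _ ≤ ENNReal.ofReal (2 * √(2 * δ / |μ i₀|)) *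
          volume (WithLp.toLp 2 ⁻¹' Metric.closedBall (0 : EuclideanSpace ℝ (Fin m)) R) := by
        rw [Measure.volume_eq_prod]
        refine Measure.prod_apply_le_mul_of_forall_slice_le hG
          (fun p hp => show WithLp.toLp 2 p.2 ∈ _ from mem_closedBall_zero_iff.2 hp.2)
          fun z => (measure_mono fun t ht => ht.1).trans ?_
        exact (Real.volume_setOf_abs_mul_sq_add_le hμ (∑ j, μ (i₀.succAbove j) * z j ^ 2) δ)
    _ = _ := by
        rw [(PiLp.volume_preserving_toLp _).measure_preimage
          measurableSet_closedBall.nullMeasurableSet]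

namespace LinearMap.IsSymmetric

variable {E : Type*} [NormedAddCommGroup E] [InnerProductSpace ℝ E] [FiniteDimensional ℝ E]
  {T : E →ₗ[ℝ] E} (hT : T.IsSymmetric) {n : ℕ} (hn : Module.finrank ℝ E = n)

theorem inner_apply_self_eq_sum_eigenvalues_mul_sq (x : E) :
    inner ℝ (T x) x = ∑ i, hT.eigenvalues hn i * (hT.eigenvectorBasis hn).repr x i ^ 2 := by
  rw [← (hT.eigenvectorBasis hn).repr.inner_map_map, PiLp.inner_apply]
  refine Finset.sum_congr rfl fun i _ => ?_
  rw [eigenvectorBasis_apply_self_apply, RCLike.inner_apply, conj_trivial,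
    RCLike.ofReal_real_eq_id, id_eq]
  ring

theorem norm_apply_sq_eq_sum_sq (x : E) :
    ‖T x‖ ^ 2 = ∑ i, (hT.eigenvalues hn i * (hT.eigenvectorBasis hn).repr x i) ^ 2 := by
  rw [← (hT.eigenvectorBasis hn).repr.norm_map, EuclideanSpace.norm_sq_eq]
  simp only [eigenvectorBasis_apply_self_apply, RCLike.ofReal_real_eq_id, id_eq,
    Real.norm_eq_abs, sq_abs]

theorem exists_opNorm_le_abs_eigenvalues (h : 0 < ‖LinearMap.toContinuousLinearMap T‖) :
    ∃ i, ‖LinearMap.toContinuousLinearMap T‖ ≤ |hT.eigenvalues hn i| := by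
  have : Nonempty (Fin n) := by
    refine Fin.pos_iff_nonempty.1 (Nat.pos_of_ne_zero fun h0 => h.ne' ?_)
    have : Subsingleton E := Module.finrank_zero_iff.1 (hn.trans h0)
    rw [Subsingleton.elim (LinearMap.toContinuousLinearMap T) 0, norm_zero]
  obtain ⟨i₀, hi₀⟩ := Finite.exists_max fun i => |hT.eigenvalues hn i|
  refine ⟨i₀, ContinuousLinearMap.opNorm_le_bound _ (abs_nonneg _) fun x => ?_⟩
  rw [← pow_le_pow_iff_left₀ (norm_nonneg _) (by positivity) two_ne_zero,
    LinearMap.coe_toContinuousLinearMap', norm_apply_sq_eq_sum_sq hT hn, mul_pow, sq_abs,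
    ← (hT.eigenvectorBasis hn).repr.norm_map, EuclideanSpace.norm_sq_eq, Finset.mul_sum]
  refine Finset.sum_le_sum fun i _ => ?_
  rw [mul_pow, Real.norm_eq_abs, sq_abs]
  exact mul_le_mul_of_nonneg_right (sq_le_sq.2 (by simpa using hi₀ i)) (sq_nonneg _)

theorem volume_setOf_abs_inner_le_inter_closedBall_le [MeasurableSpace E] [BorelSpace E]
    {m : ℕ} (hm : Module.finrank ℝ E = m + 1) {i₀ : Fin (m + 1)}
    (hμ : hT.eigenvalues hm i₀ ≠ 0) (δ R : ℝ) :
    volume ({x : E | |inner ℝ (T x) x| ≤ δ} ∩ Metric.closedBall 0 R) ≤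
      ENNReal.ofReal (2 * √(2 * δ / |hT.eigenvalues hm i₀|)) *
        volume (Metric.closedBall (0 : EuclideanSpace ℝ (Fin m)) R) := by
  let b := hT.eigenvectorBasis hm
  have hslab : {x : E | |inner ℝ (T x) x| ≤ δ} ∩ Metric.closedBall 0 R =
      b.repr ⁻¹' {y | |∑ i, hT.eigenvalues hm i * y i ^ 2| ≤ δ ∧ ‖y‖ ≤ R} := by
    ext x
    simp [hT.inner_apply_self_eq_sum_eigenvalues_mul_sq hm, b]
  rw [hslab]
  exact (b.measurePreserving_repr.measure_preimage_le _).trans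
    (EuclideanSpace.volume_setOf_abs_sum_mul_sq_le_and_norm_le _ hμ δ R)

end LinearMap.IsSymmetric

theorem Matrix.sum_sum_mul_mul_eq_inner_toEuclideanLin {ι : Type*} [Fintype ι]
    [DecidableEq ι] (X : Matrix ι ι ℝ) (a : EuclideanSpace ℝ ι) :
    ∑ i, ∑ j, a i * X i j * a j = inner ℝ (toEuclideanLin X a) a := by
  simp only [toLpLin_apply, PiLp.inner_apply, RCLike.inner_apply, conj_trivial, mulVec,
    dotProduct, Finset.mul_sum, mul_assoc]

theorem unitBallVol_pos (k : ℕ) : 0 < unitBallVol k :=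
  ENNReal.toReal_pos (Metric.measure_ball_pos volume _ one_pos).ne' measure_ball_lt_top.ne

theorem volume_closedBall_eq_pow_mul_unitBallVol (k : ℕ) {R : ℝ} (hR : 0 ≤ R) :
    volume (Metric.closedBall (0 : EuclideanSpace ℝ (Fin k)) R) =
      ENNReal.ofReal (R ^ k * unitBallVol k) := by
  rw [Measure.addHaar_closedBall _ _ hR, finrank_euclideanSpace_fin, unitBallVol,
    ENNReal.ofReal_mul (by positivity), ENNReal.ofReal_toReal measure_ball_lt_top.ne,
    ENNReal.ofReal_pow hR]

theorem inv_volume_closedBall_mul_le {m : ℕ} {R ε a δ : ℝ} (hR : 0 < R) (hε : 0 < ε)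
    (hεa : ε ≤ a) :
    (volume (Metric.closedBall (0 : EuclideanSpace ℝ (Fin (m + 1))) R))⁻¹ *
        (ENNReal.ofReal (2 * √(2 * δ / a)) *
          volume (Metric.closedBall (0 : EuclideanSpace ℝ (Fin m)) R)) ≤
      ENNReal.ofReal (2 * √(2 * δ) * unitBallVol m / (√ε * R * unitBallVol (m + 1))) := by
  have hV₀ := unitBallVol_pos m
  have hV₁ := unitBallVol_pos (m + 1)
  have hsqrt : √(2 * δ / a) ≤ √(2 * δ) / √ε := by
    rw [Real.sqrt_div' _ (hε.le.trans hεa)]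
    gcongr
  rw [volume_closedBall_eq_pow_mul_unitBallVol _ hR.le,
    volume_closedBall_eq_pow_mul_unitBallVol _ hR.le,
    ← ENNReal.ofReal_inv_of_pos (by positivity), ← ENNReal.ofReal_mul (by positivity),
    ← ENNReal.ofReal_mul (by positivity)]
  refine ENNReal.ofReal_le_ofReal ?_
  calc (R ^ (m + 1) * unitBallVol (m + 1))⁻¹ * (2 * √(2 * δ / a) * (R ^ m * unitBallVol m))
      = 2 * √(2 * δ / a) * unitBallVol m / (R * unitBallVol (m + 1)) := by
        field_simp
        ring
    _ ≤ 2 * (√(2 * δ) / √ε) * unitBallVol m / (R * unitBallVol (m + 1)) := by gcongr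
    _ = _ := by field_simp

theorem uniform_quadratic_concentration_general {n : ℕ} (R ε δ : ℝ)
    (hR : 0 < R) (hε : 0 < ε)
    (X : Matrix (Fin n) (Fin n) ℝ) (hsymm : X = Xᵀ) (hX : ε ≤ matSpectralNorm X) :
    ((volume (Metric.closedBall (0 : EuclideanSpace ℝ (Fin n)) R))⁻¹ •
        volume.restrict (Metric.closedBall (0 : EuclideanSpace ℝ (Fin n)) R))
      {a : EuclideanSpace ℝ (Fin n) | |∑ i, ∑ j, a i * X i j * a j| ≤ δ}
      ≤ ENNReal.ofReal
          (2 * Real.sqrt (2 * δ) * unitBallVol (n - 1) /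
            (Real.sqrt ε * R * unitBallVol n)) := by
  have hT : (toEuclideanLin X).IsSymmetric :=
    isSymmetric_toEuclideanLin_iff.2 (isHermitian_iff_isSymm.2 hsymm.symm)
  obtain ⟨i₀, hi₀⟩ :=
    hT.exists_opNorm_le_abs_eigenvalues finrank_euclideanSpace_fin (hε.trans_le hX)
  obtain ⟨m, rfl⟩ := Nat.exists_eq_add_one.2 i₀.pos
  have hεμ : ε ≤ |hT.eigenvalues finrank_euclideanSpace_fin i₀| := hX.trans hi₀
  simp only [sum_sum_mul_mul_eq_inner_toEuclideanLin, Nat.add_sub_cancel]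
  rw [Measure.smul_apply, Measure.restrict_apply' measurableSet_closedBall, smul_eq_mul]
  calc _ ≤ _ := by
        gcongr
        exact hT.volume_setOf_abs_inner_le_inter_closedBall_le _
          (abs_pos.1 (hε.trans_le hεμ)) δ R
    _ ≤ _ := inv_volume_closedBall_mul_le hR hε hεμ

/-- concentration bound for the quadratic form `aᵀXa` with `a`
uniformly distributed on the Euclidean ball of radius `R`. -/
theorem uniform_quadratic_concentration {n : ℕ} (R ε δ : ℝ)
    (hR : 0 < R) (hε : 0 < ε) (hδ : 0 < δ)
    (X : Matrix (Fin n) (Fin n) ℝ) (hsymm : X = Xᵀ) (hX : ε ≤ matSpectralNorm X) :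
    ((volume (Metric.closedBall (0 : EuclideanSpace ℝ (Fin n)) R))⁻¹ •
        volume.restrict (Metric.closedBall (0 : EuclideanSpace ℝ (Fin n)) R))
      {a : EuclideanSpace ℝ (Fin n) | |∑ i, ∑ j, a i * X i j * a j| ≤ δ}
      ≤ ENNReal.ofReal
          (2 * Real.sqrt (2 * δ) * unitBallVol (n - 1) /
            (Real.sqrt ε * R * unitBallVol n)) :=
  uniform_quadratic_concentration_general R ε δ hR hε X hsymm hX
end
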